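/- Let P be a Markov kernel on a measurable space E and suppose there exist n ≥ 1 and L ≥ 1 such that P_n(x,B) ≤ L·P_n(x',B) for all x, x' ∈ E and all measurable sets B (the multi-step strong mixing condition (A.3)). Then for every bounded measurable g : E → ℝ (defining the MPE operator T) and every bounded measurable f : E → ℝ one has ‖T^n f‖_sp ≤ n·‖g‖_sp + (1/2)·log L, where T^n is the n-fold iterate of T. -/

import Mathlib

/-!
The entropic utility `μ(F) = log ∫ exp F dμ` is monotone in `F` and commutes with adding
constants. Put `ψₖ(x) = log ∫ exp f dPₖ(x)`; since `Pₖ₊₁(x) = ∫ Pₖ(y) P(x, dy)`, we have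
`ψₖ₊₁(x) = μₓ(ψₖ)`, and induction on `k` traps `Tᵏ f` between `ψₖ + k inf g` and
`ψₖ + k sup g`. Strong mixing gives `ψₙ(x) ≤ ψₙ(x') + log L`, hence
`Tⁿ f(x) - Tⁿ f(x') ≤ n (sup g - inf g) + log L`.
-/

open MeasureTheory ProbabilityTheory

/-- The span seminorm `‖f‖_sp = (sup f - inf f)/2`. -/
noncomputable def spanSeminorm {E : Type*} (f : E → ℝ) : ℝ :=
  ((⨆ x, f x) - ⨅ x, f x) / 2

/-- The multiplicative Poisson equation (MPE) operator
`(T f)(x) = g(x) + log ∫ exp (f y) P(x, dy)`. -/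
noncomputable def mpeOp {E : Type*} [MeasurableSpace E] (P : Kernel E E) (g : E → ℝ)
    (f : E → ℝ) : E → ℝ :=
  fun x => g x + Real.log (∫ y, Real.exp (f y) ∂(P x))

/-- The `n`-step kernel `P_n`: the `n`-fold composition of `P` with itself
(`stepKernel P 0` is the identity kernel and `stepKernel P 1 = P`). -/
noncomputable def stepKernel {E : Type*} [MeasurableSpace E] (P : Kernel E E) : ℕ → Kernel E E
  | 0 => Kernel.id
  | n + 1 => (stepKernel P n) ∘ₖ P

lemma spanSeminorm_of_isEmpty {E : Type*} [IsEmpty E] (u : E → ℝ) : spanSeminorm u = 0 := by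
  simp [spanSeminorm]

lemma spanSeminorm_le_of_forall_le_add {E : Type*} [Nonempty E] {u : E → ℝ} {c : ℝ}
    (h : ∀ x x', u x ≤ u x' + c) : spanSeminorm u ≤ c / 2 := by
  have hsup : (⨆ x, u x) ≤ (⨅ x, u x) + c :=
    ciSup_le fun x => by
      linarith [le_ciInf (f := u) fun x' => show u x - c ≤ u x' by linarith [h x x']]
  unfold spanSeminorm
  linarith

lemma integrable_exp_of_forall_le {E : Type*} [MeasurableSpace E] {μ : Measure E}
    [IsFiniteMeasure μ] {F : E → ℝ} (hF : Measurable F) {c : ℝ} (hFc : ∀ y, F y ≤ c) :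
    Integrable (fun y => Real.exp (F y)) μ := by
  refine (integrable_const (Real.exp c)).mono' hF.exp.aestronglyMeasurable
    (ae_of_all _ fun y => ?_)
  rw [Real.norm_of_nonneg (Real.exp_pos _).le]
  exact Real.exp_le_exp.2 (hFc y)

lemma integral_le_mul_integral_of_forall_measureReal_le {E : Type*} [MeasurableSpace E]
    {μ ν : Measure E} [IsFiniteMeasure μ] [IsFiniteMeasure ν] {L : ℝ} (hL : 0 ≤ L)
    (h : ∀ B, MeasurableSet B → μ.real B ≤ L * ν.real B) {φ : E → ℝ} (hφ : 0 ≤ φ)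
    (hφi : Integrable φ ν) :
    ∫ y, φ y ∂μ ≤ L * ∫ y, φ y ∂ν := by
  have hle : μ ≤ ENNReal.ofReal L • ν := by
    refine Measure.le_iff.2 fun B hB => ?_
    rw [Measure.smul_apply, smul_eq_mul, ← ENNReal.ofReal_toReal (measure_ne_top μ B),
      ← ENNReal.ofReal_toReal (measure_ne_top ν B), ← ENNReal.ofReal_mul hL]
    exact ENNReal.ofReal_le_ofReal (h B hB)
  calc ∫ y, φ y ∂μ ≤ ∫ y, φ y ∂(ENNReal.ofReal L • ν) :=
        integral_mono_measure hle (ae_of_all _ hφ) (hφi.smul_measure ENNReal.ofReal_ne_top)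
    _ = L * ∫ y, φ y ∂ν := by
        rw [integral_smul_measure, ENNReal.toReal_ofReal hL, smul_eq_mul]

/-- The paper's `μₓ(F)` is `entropicUtility (P x) F`. -/
noncomputable def entropicUtility {E : Type*} [MeasurableSpace E] (μ : Measure E)
    (F : E → ℝ) : ℝ :=
  Real.log (∫ y, Real.exp (F y) ∂μ)

namespace entropicUtility

variable {E : Type*} [MeasurableSpace E] {μ ν : Measure E} {F G : E → ℝ} {c d : ℝ}

lemma mono [NeZero μ] (hF : Integrable (fun y => Real.exp (F y)) μ)
    (hG : Integrable (fun y => Real.exp (G y)) μ) (hFG : ∀ y, F y ≤ G y) :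
    entropicUtility μ F ≤ entropicUtility μ G :=
  Real.log_le_log (integral_exp_pos hF)
    (integral_mono hF hG fun y => Real.exp_le_exp.2 (hFG y))

lemma add_const [NeZero μ] (hF : Integrable (fun y => Real.exp (F y)) μ) (d : ℝ) :
    entropicUtility μ (fun y => F y + d) = entropicUtility μ F + d := by
  simp only [entropicUtility, Real.exp_add, integral_mul_const]
  rw [Real.log_mul (integral_exp_pos hF).ne' (Real.exp_pos d).ne', Real.log_exp]

lemma le_add_of_forall_le_add [IsFiniteMeasure μ] [NeZero μ] (hF : Measurable F)
    (hG : Measurable G) (hGc : ∀ y, G y ≤ c) (hFG : ∀ y, F y ≤ G y + d) :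
    entropicUtility μ F ≤ entropicUtility μ G + d :=
  calc entropicUtility μ F ≤ entropicUtility μ (fun y => G y + d) :=
        mono (integrable_exp_of_forall_le (c := c + d) hF fun y => by linarith [hFG y, hGc y])
          (integrable_exp_of_forall_le (c := c + d) (hG.add_const d) fun y => by
            linarith [hGc y]) hFG
    _ = entropicUtility μ G + d := add_const (integrable_exp_of_forall_le hG hGc) d

lemma le_of_forall_le [IsProbabilityMeasure μ] (hF : Measurable F) (hFc : ∀ y, F y ≤ c) :
    entropicUtility μ F ≤ c :=
  calc entropicUtility μ F ≤ entropicUtility μ (fun _ => 0) + c :=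
        le_add_of_forall_le_add hF measurable_const (fun _ => le_rfl) fun y => by simpa using hFc y
    _ = c := by simp [entropicUtility]

lemma le_log_add_of_forall_measureReal_le [IsFiniteMeasure μ] [NeZero μ] [IsFiniteMeasure ν]
    [NeZero ν] {L : ℝ} (hL : 0 < L) (h : ∀ B, MeasurableSet B → μ.real B ≤ L * ν.real B)
    (hF : Measurable F) (hFc : ∀ y, F y ≤ c) :
    entropicUtility μ F ≤ Real.log L + entropicUtility ν F := by
  have hν := integrable_exp_of_forall_le (μ := ν) hF hFc
  rw [entropicUtility, entropicUtility, ← Real.log_mul hL.ne' (integral_exp_pos hν).ne']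
  exact Real.log_le_log (integral_exp_pos (integrable_exp_of_forall_le hF hFc))
    (integral_le_mul_integral_of_forall_measureReal_le hL.le h (fun y => (Real.exp_pos _).le) hν)

lemma measurable_kernel {α β : Type*} [MeasurableSpace α] [MeasurableSpace β]
    (κ : Kernel α β) {F : β → ℝ} (hF : Measurable F) :
    Measurable fun x => entropicUtility (κ x) F :=
  Real.measurable_log.comp hF.exp.stronglyMeasurable.integral_kernel.measurable

end entropicUtility

section Kernel

variable {E : Type*} [MeasurableSpace E] (P : Kernel E E) [IsMarkovKernel P]

instance stepKernel.instIsMarkovKernel : ∀ n, IsMarkovKernel (stepKernel P n)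
  | 0 => by rw [stepKernel]; infer_instance
  | n + 1 => by
      have := stepKernel.instIsMarkovKernel n
      rw [stepKernel]
      infer_instance

lemma entropicUtility_stepKernel_succ {f : E → ℝ} (hf : Measurable f) {C : ℝ}
    (hfC : ∀ y, f y ≤ C) (k : ℕ) (x : E) :
    entropicUtility (stepKernel P (k + 1) x) f =
      entropicUtility (P x) fun y => entropicUtility (stepKernel P k y) f := by
  unfold entropicUtility
  rw [stepKernel, Kernel.integral_comp (integrable_exp_of_forall_le hf hfC)]
  exact congrArg Real.log <| integral_congr_ae <| ae_of_all _ fun y =>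
    (Real.exp_log (integral_exp_pos (integrable_exp_of_forall_le hf hfC))).symm

lemma mpeOp_iterate_envelope {g : E → ℝ} (hg : Measurable g) {a b : ℝ}
    (hga : ∀ x, a ≤ g x) (hgb : ∀ x, g x ≤ b) {f : E → ℝ} (hf : Measurable f) {C : ℝ}
    (hfC : ∀ y, f y ≤ C) (k : ℕ) :
    Measurable ((mpeOp P g)^[k] f) ∧ ∀ x,
      k * a + entropicUtility (stepKernel P k x) f ≤ (mpeOp P g)^[k] f x ∧
      (mpeOp P g)^[k] f x ≤ k * b + entropicUtility (stepKernel P k x) f := by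
  induction k with
  | zero =>
    refine ⟨hf, fun x => ?_⟩
    simp only [entropicUtility, stepKernel, Kernel.id_apply,
      integral_dirac' _ x hf.exp.stronglyMeasurable]
    simp
  | succ k ih =>
    obtain ⟨hFm, hF⟩ := ih
    set F := (mpeOp P g)^[k] f
    set ψ := fun y => entropicUtility (stepKernel P k y) f
    have hψm : Measurable ψ := entropicUtility.measurable_kernel _ hf
    have hψC : ∀ y, ψ y ≤ C := fun y => entropicUtility.le_of_forall_le hf hfC
    have hFC : ∀ y, F y ≤ k * b + C := fun y => by linarith [(hF y).2, hψC y]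
    rw [Function.iterate_succ_apply']
    refine ⟨hg.add (entropicUtility.measurable_kernel P hFm), fun x => ?_⟩
    have upper : entropicUtility (P x) F ≤ entropicUtility (P x) ψ + k * b :=
      entropicUtility.le_add_of_forall_le_add hFm hψm hψC fun y => by linarith [(hF y).2]
    have lower : entropicUtility (P x) ψ ≤ entropicUtility (P x) F + -(k * a) :=
      entropicUtility.le_add_of_forall_le_add hψm hFm hFC fun y => by linarith [(hF y).1]
    change _ ≤ g x + entropicUtility (P x) F ∧ g x + entropicUtility (P x) F ≤ _
    rw [entropicUtility_stepKernel_succ P hf hfC]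
    push_cast
    constructor <;> linarith [hga x, hgb x]

end Kernel

theorem mpe_iterate_span_bound_of_strong_mixing_general {E : Type*} [MeasurableSpace E]
    (P : Kernel E E) [IsMarkovKernel P]
    (n : ℕ) (L : ℝ) (hL : 1 ≤ L)
    (hsm : ∀ x x' : E, ∀ B : Set E, MeasurableSet B →
      ((stepKernel P n) x B).toReal ≤ L * ((stepKernel P n) x' B).toReal)
    (g : E → ℝ) (hg_meas : Measurable g) (Cg : ℝ) (hg_bdd : ∀ x, |g x| ≤ Cg)
    (f : E → ℝ) (hf_meas : Measurable f) (Cf : ℝ) (hf_bdd : ∀ x, |f x| ≤ Cf) :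
    spanSeminorm ((mpeOp P g)^[n] f) ≤ (n : ℝ) * spanSeminorm g + (1 / 2) * Real.log L := by
  rcases isEmpty_or_nonempty E with hE | hE
  · rw [spanSeminorm_of_isEmpty, spanSeminorm_of_isEmpty]
    linarith [Real.log_nonneg hL]
  have hgS : BddAbove (Set.range g) :=
    ⟨Cg, by rintro _ ⟨x, rfl⟩; exact (abs_le.1 (hg_bdd x)).2⟩
  have hgI : BddBelow (Set.range g) :=
    ⟨-Cg, by rintro _ ⟨x, rfl⟩; exact (abs_le.1 (hg_bdd x)).1⟩
  have hfC : ∀ y, f y ≤ Cf := fun y => (abs_le.1 (hf_bdd y)).2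
  have envelope := (mpeOp_iterate_envelope P hg_meas (ciInf_le hgI) (le_ciSup hgS) hf_meas hfC n).2
  have mixing : ∀ x x', entropicUtility (stepKernel P n x) f ≤
      Real.log L + entropicUtility (stepKernel P n x') f := fun x x' =>
    entropicUtility.le_log_add_of_forall_measureReal_le (by linarith) (hsm x x') hf_meas hfC
  calc spanSeminorm ((mpeOp P g)^[n] f) ≤ (n * ((⨆ x, g x) - ⨅ x, g x) + Real.log L) / 2 :=
        spanSeminorm_le_of_forall_le_add fun x x' => by
          linarith [(envelope x).2, (envelope x').1, mixing x x']
    _ = (n : ℝ) * spanSeminorm g + (1 / 2) * Real.log L := by unfold spanSeminorm; ring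

/-- Under the multi-step strong mixing condition (A.3), `P_n(x,·) ≤ L · P_n(x',·)`, the
`n`-fold iterate of the MPE operator satisfies `‖Tⁿ f‖_sp ≤ n ‖g‖_sp + (1/2) log L` for
every bounded measurable `f`. -/
theorem mpe_iterate_span_bound_of_strong_mixing {E : Type*} [MeasurableSpace E]
    (P : Kernel E E) [IsMarkovKernel P]
    (n : ℕ) (hn : 1 ≤ n) (L : ℝ) (hL : 1 ≤ L)
    (hsm : ∀ x x' : E, ∀ B : Set E, MeasurableSet B →
      ((stepKernel P n) x B).toReal ≤ L * ((stepKernel P n) x' B).toReal)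
    (g : E → ℝ) (hg_meas : Measurable g) (Cg : ℝ) (hg_bdd : ∀ x, |g x| ≤ Cg)
    (f : E → ℝ) (hf_meas : Measurable f) (Cf : ℝ) (hf_bdd : ∀ x, |f x| ≤ Cf) :
    spanSeminorm ((mpeOp P g)^[n] f) ≤ (n : ℝ) * spanSeminorm g + (1 / 2) * Real.log L :=
  mpe_iterate_span_bound_of_strong_mixing_general P n L hL hsm g hg_meas Cg hg_bdd f hf_meas Cf
    hf_bdd
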